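/- arXiv:math/0501034 — 3 statements merged into one kernel-verified Lean document; each statement's English description precedes it below -/
import Mathlib

section
/- Let k ≥ 1, η > 0, E > 0, F > 0 and real numbers a > b. For each integer n ≥ 1 let g_n : ℂ^k → ℂ^k satisfy g_n(0) = 0; define G_0 = id and G_n = g_n ∘ G_{n−1}, and let L_n denote the differential of G_n at 0 (so L_0 = id). Assume: (i) for every n ≥ 0, L_n is an invertible ℂ-linear map and g_{n+1} is holomorphic and injective on an open subset of ℂ^k containing G_n(B(0,η)) ∪ L_n(B̄(0,η)); (ii) for every n ≥ 0, every γ ∈ (0,1] and every u ∈ L_n(B̄(0,γη)), one has ‖g_{n+1}(u) − (d_0 g_{n+1})(u)‖ ≤ γ·E·e^{−n a}, where d_0 g_{n+1} is the differential of g_{n+1} at 0; (iii) for every n ≥ 0, ‖L_{n+1}^{−1}‖ ≤ F·e^{n b}. Then there exists S ∈ (0, η] such that for every n ≥ 0, L_n(B(0,S)) ⊆ G_n(B(0,η)). -/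
open Metric Set

/-- Quadratic Schwarz-type bound: a holomorphic map on a neighborhood of the closed ball of
radius `η`, with zero derivative at `0` and a first-order sup bound `‖ψ v‖ ≤ M‖v‖/η`,
satisfies a second-order bound on the half ball. -/
lemma aux_quad {Ek F : Type*} [NormedAddCommGroup Ek] [NormedSpace ℂ Ek]
    [NormedAddCommGroup F] [NormedSpace ℂ F] [CompleteSpace F]
    {ψ : Ek → F} {V : Set Ek} {η M : ℝ} (hη : 0 < η) (hM : 0 < M)
    (hVo : IsOpen V) (hVb : closedBall 0 η ⊆ V) (hd : DifferentiableOn ℂ ψ V)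
    (hD0 : HasFDerivAt ψ (0 : Ek →L[ℂ] F) 0)
    (hb : ∀ v : Ek, ‖v‖ ≤ η → ‖ψ v‖ ≤ M * ‖v‖ / η) :
    ∀ w : Ek, ‖w‖ ≤ η / 2 → ‖ψ w‖ ≤ 2 * M * ‖w‖ ^ 2 / η ^ 2 := by
  have hψ0 : ψ 0 = 0 := by
    have := hb 0 (by simp [hη.le])
    simp only [norm_zero, mul_zero, zero_div] at this
    exact norm_le_zero_iff.mp this
  intro w hw
  rcases eq_or_ne w 0 with rfl | hw0
  · simp [hψ0]
  · set v : Ek := ((‖w‖ : ℂ))⁻¹ • w with hv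
    have hwn : (0:ℝ) < ‖w‖ := norm_pos_iff.mpr hw0
    have hvn : ‖v‖ = 1 := by
      rw [hv, norm_smul, norm_inv, Complex.norm_real, Real.norm_eq_abs, abs_of_pos hwn]
      field_simp
    set φ : ℂ → F := fun z => ψ (z • v) with hφ
    have hmem : ∀ z ∈ ball (0:ℂ) η, z • v ∈ V := by
      intro z hz
      apply hVb
      rw [mem_closedBall_zero_iff, norm_smul, hvn, mul_one]
      exact (mem_ball_zero_iff.mp hz).le
    have hφd : DifferentiableOn ℂ φ (ball 0 η) := by
      have : DifferentiableOn ℂ (ψ ∘ fun z : ℂ => z • v) (ball 0 η) :=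
        hd.comp ((differentiable_id.smul_const v).differentiableOn) hmem
      exact this
    have hφ0 : φ 0 = 0 := by simp [hφ, hψ0]
    have hder : HasDerivAt φ 0 0 := by
      have h1 : HasDerivAt (fun z : ℂ => z • v) v 0 := by
        simpa using (hasDerivAt_id (0:ℂ)).smul_const v
      have hD0' : HasFDerivAt ψ (0 : Ek →L[ℂ] F) ((fun z : ℂ => z • v) 0) := by
        simpa using hD0
      have h2 := hD0'.comp_hasDerivAt 0 h1
      have h3 : HasDerivAt (ψ ∘ fun z : ℂ => z • v) 0 0 := by simpa using h2
      exact h3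
    set χ : ℂ → F := dslope φ 0 with hχ
    have hχd : DifferentiableOn ℂ χ (ball 0 η) :=
      (Complex.differentiableOn_dslope (ball_mem_nhds _ hη)).mpr hφd
    have hχ0 : χ 0 = 0 := by rw [hχ, dslope_same]; exact hder.deriv
    have hχb : ∀ z ∈ ball (0:ℂ) η, ‖χ z‖ ≤ M / η := by
      intro z hz
      rcases eq_or_ne z 0 with rfl | h0
      · rw [hχ0]
        simp only [norm_zero]
        positivity
      · rw [hχ, dslope_of_ne _ h0, slope_def_module, hφ0, sub_zero, sub_zero,
          norm_smul, norm_inv]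
        have hzn : (0:ℝ) < ‖z‖ := norm_pos_iff.mpr h0
        have hb' : ‖φ z‖ ≤ M * ‖z‖ / η := by
          have : ‖z • v‖ = ‖z‖ := by rw [norm_smul, hvn, mul_one]
          have h3 := hb (z • v) (by rw [this]; exact (mem_ball_zero_iff.mp hz).le)
          rwa [this] at h3
        calc ‖z‖⁻¹ * ‖φ z‖ ≤ ‖z‖⁻¹ * (M * ‖z‖ / η) := by
              exact mul_le_mul_of_nonneg_left hb' (by positivity)
          _ = M / η := by rw [mul_comm M ‖z‖, mul_div_assoc, inv_mul_cancel_left₀ hzn.ne']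
    have hmapsχ : MapsTo χ (ball (0:ℂ) η) (ball (χ 0) (2 * M / η)) := by
      intro z hz
      rw [mem_ball, dist_eq_norm, hχ0, sub_zero]
      exact lt_of_le_of_lt (hχb z hz) (by rw [div_lt_div_iff_of_pos_right hη]; linarith)
    set z : ℂ := ((‖w‖ : ℝ) : ℂ) with hz
    have hz0 : z ≠ 0 := by
      simp only [hz, ne_eq, Complex.ofReal_eq_zero]
      exact hwn.ne'
    have hzn : ‖z‖ = ‖w‖ := by rw [hz, Complex.norm_real, Real.norm_eq_abs, abs_of_pos hwn]
    have hzb : z ∈ ball (0:ℂ) η := by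
      rw [mem_ball_zero_iff, hzn]; linarith
    have key := Complex.norm_dslope_le_div_of_mapsTo_ball hχd (hmapsχ.mono_right ball_subset_closedBall) hzb
    have hzv : z • v = w := by
      rw [hz, hv, smul_smul, mul_inv_cancel₀ (by exact_mod_cast hwn.ne'), one_smul]
    have e1 : ‖χ z‖ = ‖w‖⁻¹ * ‖ψ w‖ := by
      rw [hχ, dslope_of_ne _ hz0, slope_def_module, hφ0, sub_zero, sub_zero,
        norm_smul, norm_inv, hzn]
      have hφzw : φ z = ψ w := by rw [show φ z = ψ (z • v) from rfl, hzv]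
      rw [hφzw]
    have e2 : ‖dslope χ 0 z‖ = ‖w‖⁻¹ * ‖χ z‖ := by
      rw [dslope_of_ne _ hz0, slope_def_module, hχ0, sub_zero, sub_zero,
        norm_smul, norm_inv, hzn]
    rw [e2, e1] at key
    -- key : ‖w‖⁻¹ * (‖w‖⁻¹ * ‖ψ w‖) ≤ 2 * M / η / η
    have : ‖ψ w‖ ≤ (2 * M / η / η) * (‖w‖ * ‖w‖) := by
      rw [← mul_le_mul_iff_right₀ (by positivity : (0:ℝ) < ‖w‖⁻¹ * ‖w‖⁻¹)]
      calc ‖w‖⁻¹ * ‖w‖⁻¹ * ‖ψ w‖ = ‖w‖⁻¹ * (‖w‖⁻¹ * ‖ψ w‖) := by ring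
        _ ≤ 2 * M / η / η := key
        _ = ‖w‖⁻¹ * ‖w‖⁻¹ * (2 * M / η / η * (‖w‖ * ‖w‖)) := by
            field_simp
    calc ‖ψ w‖ ≤ (2 * M / η / η) * (‖w‖ * ‖w‖) := this
      _ = 2 * M * ‖w‖ ^ 2 / η ^ 2 := by ring
lemma aux_lip {Ek F : Type*} [NormedAddCommGroup Ek] [NormedSpace ℂ Ek]
    [NormedAddCommGroup F] [NormedSpace ℂ F] [CompleteSpace F]
    {ψ : Ek → F} {V : Set Ek} {η M : ℝ} (hη : 0 < η) (hM : 0 < M)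
    (hVo : IsOpen V) (hVb : closedBall 0 η ⊆ V) (hd : DifferentiableOn ℂ ψ V)
    (hD0 : HasFDerivAt ψ (0 : Ek →L[ℂ] F) 0)
    (hb : ∀ v : Ek, ‖v‖ ≤ η → ‖ψ v‖ ≤ M * ‖v‖ / η)
    {r : ℝ} (hr : 0 < r) (hr8 : r ≤ η / 8) :
    ∀ x ∈ closedBall (0:Ek) r, ∀ y ∈ closedBall (0:Ek) r,
      ‖ψ x - ψ y‖ ≤ 40 * M * r / η ^ 2 * ‖x - y‖ := by
  have hquad := aux_quad hη hM hVo hVb hd hD0 hb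
  have hdiffat : ∀ v ∈ closedBall (0:Ek) r, DifferentiableAt ℂ ψ v := by
    intro v hv
    refine hd.differentiableAt (hVo.mem_nhds (hVb ?_))
    rw [mem_closedBall_zero_iff] at hv ⊢
    linarith
  have hbound : ∀ v ∈ closedBall (0:Ek) r, ‖fderiv ℂ ψ v‖ ≤ 40 * M * r / η ^ 2 := by
    intro v hv
    rw [mem_closedBall_zero_iff] at hv
    refine ContinuousLinearMap.opNorm_le_bound _ (by positivity) ?_
    intro x
    rcases eq_or_ne x 0 with rfl | hx0
    · simp
    have hxn : (0:ℝ) < ‖x‖ := norm_pos_iff.mpr hx0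
    set e : Ek := ((‖x‖ : ℂ))⁻¹ • x with he
    have hen : ‖e‖ = 1 := by
      rw [he, norm_smul, norm_inv, Complex.norm_real, Real.norm_eq_abs, abs_of_pos hxn]
      field_simp
    set θ : ℂ → F := fun z => ψ (v + z • e) with hθ
    have hmem : ∀ z ∈ ball (0:ℂ) (2 * r), ‖v + z • e‖ ≤ 3 * r := by
      intro z hz
      rw [mem_ball_zero_iff] at hz
      calc ‖v + z • e‖ ≤ ‖v‖ + ‖z • e‖ := norm_add_le _ _
        _ ≤ r + 2 * r := by
            rw [norm_smul, hen, mul_one]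
            exact add_le_add hv hz.le
        _ = 3 * r := by ring
    have hmemV : ∀ z ∈ ball (0:ℂ) (2 * r), v + z • e ∈ V := by
      intro z hz
      apply hVb
      rw [mem_closedBall_zero_iff]
      have := hmem z hz
      linarith
    have hθd : DifferentiableOn ℂ θ (ball 0 (2 * r)) := by
      have : DifferentiableOn ℂ (ψ ∘ fun z : ℂ => v + z • e) (ball 0 (2 * r)) :=
        hd.comp (((differentiable_id.smul_const e).const_add v).differentiableOn) hmemV
      exact this
    have h5 : ‖θ 0‖ ≤ 2 * M * r ^ 2 / η ^ 2 := by
      have hθ0 : θ 0 = ψ v := by rw [hθ]; simp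
      rw [hθ0]
      calc ‖ψ v‖ ≤ 2 * M * ‖v‖ ^ 2 / η ^ 2 := hquad v (by linarith)
        _ ≤ 2 * M * r ^ 2 / η ^ 2 := by
            have : ‖v‖ ^ 2 ≤ r ^ 2 := by nlinarith [norm_nonneg v]
            gcongr
    have hmapsθ : MapsTo θ (ball (0:ℂ) (2 * r)) (ball (θ 0) (30 * M * r ^ 2 / η ^ 2)) := by
      intro z hz
      rw [mem_ball, dist_eq_norm]
      have h2 : ‖θ z‖ ≤ 2 * M * (3 * r) ^ 2 / η ^ 2 := by
        have h3 := hmem z hz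
        have h4 : ‖v + z • e‖ ≤ η / 2 := by linarith
        calc ‖θ z‖ ≤ 2 * M * ‖v + z • e‖ ^ 2 / η ^ 2 := hquad _ h4
          _ ≤ 2 * M * (3 * r) ^ 2 / η ^ 2 := by
              have : ‖v + z • e‖ ^ 2 ≤ (3 * r) ^ 2 := by
                nlinarith [norm_nonneg (v + z • e)]
              gcongr
      calc ‖θ z - θ 0‖ ≤ ‖θ z‖ + ‖θ 0‖ := norm_sub_le _ _
        _ ≤ 2 * M * (3 * r) ^ 2 / η ^ 2 + 2 * M * r ^ 2 / η ^ 2 := add_le_add h2 h5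
        _ < 30 * M * r ^ 2 / η ^ 2 := by
            rw [← add_div, div_lt_div_iff_of_pos_right (by positivity)]
            nlinarith [mul_pos hM (mul_pos hr hr)]
    have hder : HasDerivAt θ (fderiv ℂ ψ v e) 0 := by
      have h1 : HasDerivAt (fun z : ℂ => v + z • e) e 0 := by
        simpa using ((hasDerivAt_id (0:ℂ)).smul_const e).const_add v
      have hD : HasFDerivAt ψ (fderiv ℂ ψ v) ((fun z : ℂ => v + z • e) 0) := by
        have : DifferentiableAt ℂ ψ v := hdiffat v (by rwa [mem_closedBall_zero_iff])
        simpa using this.hasFDerivAt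
      have h3 : HasDerivAt (ψ ∘ fun z : ℂ => v + z • e) (fderiv ℂ ψ v e) 0 := by
        simpa using hD.comp_hasDerivAt 0 h1
      exact h3
    have key := Complex.norm_deriv_le_div_of_mapsTo_ball hθd (hmapsθ.mono_right ball_subset_closedBall) (by positivity)
    rw [hder.deriv] at key
    -- key : ‖fderiv ℂ ψ v e‖ ≤ 30 * M * r ^ 2 / η ^ 2 / (2 * r)
    have hxe : ((‖x‖ : ℝ) : ℂ) • e = x := by
      rw [he, smul_smul, mul_inv_cancel₀ (by exact_mod_cast hxn.ne'), one_smul]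
    have e2 : ‖(fderiv ℂ ψ v) x‖ = ‖x‖ * ‖(fderiv ℂ ψ v) e‖ := by
      conv_lhs => rw [← hxe]
      rw [map_smul, norm_smul, Complex.norm_real, Real.norm_eq_abs, abs_of_pos hxn]
    rw [e2]
    have hk2 : 30 * M * r ^ 2 / η ^ 2 / (2 * r) = 15 * M * r / η ^ 2 := by
      field_simp
      ring
    rw [hk2] at key
    calc ‖x‖ * ‖(fderiv ℂ ψ v) e‖ ≤ ‖x‖ * (15 * M * r / η ^ 2) :=
          mul_le_mul_of_nonneg_left key hxn.le
      _ ≤ 40 * M * r / η ^ 2 * ‖x‖ := by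
          rw [mul_comm]
          have h15 : (15:ℝ) * M * r / η ^ 2 ≤ 40 * M * r / η ^ 2 := by gcongr; norm_num
          exact mul_le_mul_of_nonneg_right h15 hxn.le
  intro x hx y hy
  have := (convex_closedBall (0:Ek) r).norm_image_sub_le_of_norm_fderiv_le hdiffat hbound hy hx
  simpa using this
lemma aux_prod {δ : ℕ → ℝ} (h0 : ∀ m, 0 ≤ δ m) (h1 : ∀ m, δ m ≤ 1) :
    ∀ n : ℕ, 1 - ∑ m ∈ Finset.range n, δ m ≤ ∏ m ∈ Finset.range n, (1 - δ m) ∧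
      ∏ m ∈ Finset.range n, (1 - δ m) ≤ 1 := by
  intro n
  induction n with
  | zero => simp
  | succ n ih =>
    obtain ⟨ih1, ih2⟩ := ih
    rw [Finset.sum_range_succ, Finset.prod_range_succ]
    have hs : 0 ≤ ∑ m ∈ Finset.range n, δ m := Finset.sum_nonneg fun m _ => h0 m
    have hd : 0 ≤ 1 - δ n := by linarith [h1 n]
    constructor
    · nlinarith [mul_le_mul_of_nonneg_right ih1 hd, mul_nonneg hs (h0 n)]
    · rcases le_or_gt 0 (∏ m ∈ Finset.range n, (1 - δ m)) with hp | hp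
      · nlinarith [h0 n]
      · nlinarith

/-- The quantitative core of the linearization theorem (Théorème 1.3 of
Berteloot–Dupont): if the errors made when replacing the inverse branches
`g_{n+1}` by their differentials at `0` decay like `e^{-n a}` while the
inverses of the differentials `L_n` of the compositions `G_n` grow like
`e^{n b}`, with `a > b`, then the linear images `L_n (B(0,S))` stay inside
`G_n (B(0,η))` for some fixed radius `S > 0`. -/
theorem linearization_inclusions
    (k : ℕ) (hk : 1 ≤ k) (η E F a b : ℝ)
    (hη : 0 < η) (hE : 0 < E) (hF : 0 < F) (hab : b < a)
    (g G : ℕ → EuclideanSpace ℂ (Fin k) → EuclideanSpace ℂ (Fin k))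
    (L : ℕ → EuclideanSpace ℂ (Fin k) ≃L[ℂ] EuclideanSpace ℂ (Fin k))
    (hg0 : ∀ n, 1 ≤ n → g n 0 = 0)
    (hG0 : G 0 = id)
    (hGsucc : ∀ n, G (n + 1) = g (n + 1) ∘ G n)
    (hL : ∀ n, HasFDerivAt (G n)
      (L n : EuclideanSpace ℂ (Fin k) →L[ℂ] EuclideanSpace ℂ (Fin k)) 0)
    (hL0 : L 0 = ContinuousLinearEquiv.refl ℂ (EuclideanSpace ℂ (Fin k)))
    (hinj : ∀ n, ∃ U : Set (EuclideanSpace ℂ (Fin k)), IsOpen U ∧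
      (G n '' ball 0 η ∪ ⇑(L n) '' closedBall 0 η) ⊆ U ∧
      DifferentiableOn ℂ (g (n + 1)) U ∧ Set.InjOn (g (n + 1)) U)
    (herr : ∀ n : ℕ, ∀ γ ∈ Set.Ioc (0 : ℝ) 1, ∀ u ∈ ⇑(L n) '' closedBall 0 (γ * η),
      ‖g (n + 1) u - fderiv ℂ (g (n + 1)) 0 u‖ ≤ γ * E * Real.exp (-(n : ℝ) * a))
    (hgrow : ∀ n : ℕ,
      ‖((L (n + 1)).symm : EuclideanSpace ℂ (Fin k) →L[ℂ] EuclideanSpace ℂ (Fin k))‖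
        ≤ F * Real.exp ((n : ℝ) * b)) :
    ∃ S : ℝ, 0 < S ∧ S ≤ η ∧ ∀ n : ℕ, ⇑(L n) '' ball 0 S ⊆ G n '' ball 0 η := by
  haveI : Nonempty (Fin k) := ⟨⟨0, hk⟩⟩
  haveI hnt : Nontrivial (EuclideanSpace ℂ (Fin k)) := inferInstance
  -- the geometric ratio
  set q : ℝ := Real.exp (b - a) with hqdef
  have hq0 : 0 < q := Real.exp_pos _
  have hq1 : q < 1 := Real.exp_lt_one_iff.mpr (by linarith)
  -- the base radius
  set S₀ : ℝ := min (η / 8) (η ^ 2 * (1 - q) / (80 * E * F)) with hS0def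
  have hq1' : 0 < 1 - q := by linarith
  have hS0pos : 0 < S₀ := lt_min (by positivity) (by positivity)
  have hS0η : S₀ ≤ η / 8 := min_le_left _ _
  -- the relative losses
  set δ : ℕ → ℝ := fun m => 40 * E * F / η ^ 2 * S₀ * q ^ m with hδdef
  have hδ0 : ∀ m, 0 ≤ δ m := fun m => by positivity
  have hδle : ∀ m, δ m ≤ (1 - q) / 2 * q ^ m := by
    intro m
    have h2 : 40 * E * F / η ^ 2 * S₀ ≤ (1 - q) / 2 := by
      calc 40 * E * F / η ^ 2 * S₀
          ≤ 40 * E * F / η ^ 2 * (η ^ 2 * (1 - q) / (80 * E * F)) := by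
            have h1 : S₀ ≤ η ^ 2 * (1 - q) / (80 * E * F) := min_le_right _ _
            gcongr
        _ = (1 - q) / 2 := by field_simp; ring
    calc δ m = 40 * E * F / η ^ 2 * S₀ * q ^ m := rfl
      _ ≤ (1 - q) / 2 * q ^ m := mul_le_mul_of_nonneg_right h2 (by positivity)
  have hδhalf : ∀ m, δ m ≤ 1 / 2 := by
    intro m
    have h1 := hδle m
    have hqm : q ^ m ≤ 1 := pow_le_one₀ hq0.le hq1.le
    nlinarith [pow_nonneg hq0.le m]
  have hsum : ∀ n, ∑ m ∈ Finset.range n, δ m ≤ 1 / 2 := by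
    intro n
    have hne : q - 1 ≠ 0 := by linarith
    have hne' : 1 - q ≠ 0 := by linarith
    have hsumq : ∑ m ∈ Finset.range n, q ^ m ≤ 1 / (1 - q) := by
      rw [geom_sum_eq hq1.ne]
      have heq : (q ^ n - 1) / (q - 1) = (1 - q ^ n) / (1 - q) := by
        field_simp
        ring
      rw [heq, div_le_div_iff_of_pos_right hq1']
      nlinarith [pow_nonneg hq0.le n]
    calc ∑ m ∈ Finset.range n, δ m
        ≤ ∑ m ∈ Finset.range n, (1 - q) / 2 * q ^ m :=
          Finset.sum_le_sum fun m _ => hδle m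
      _ = (1 - q) / 2 * ∑ m ∈ Finset.range n, q ^ m := by rw [Finset.mul_sum]
      _ ≤ (1 - q) / 2 * (1 / (1 - q)) := by
          exact mul_le_mul_of_nonneg_left hsumq (by positivity)
      _ = 1 / 2 := by
          field_simp
  -- the decreasing radii
  set Sseq : ℕ → ℝ := fun n => S₀ * ∏ m ∈ Finset.range n, (1 - δ m) with hSseqdef
  have hprod := aux_prod hδ0 (fun m => by linarith [hδhalf m])
  have hS2 : ∀ n, S₀ / 2 ≤ Sseq n := by
    intro n
    have h1 := (hprod n).1
    have h2 := hsum n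
    have h3 : (1:ℝ)/2 ≤ ∏ m ∈ Finset.range n, (1 - δ m) := by linarith
    calc S₀ / 2 = S₀ * (1/2) := by ring
      _ ≤ S₀ * ∏ m ∈ Finset.range n, (1 - δ m) :=
          mul_le_mul_of_nonneg_left h3 hS0pos.le
      _ = Sseq n := rfl
  have hSle : ∀ n, Sseq n ≤ S₀ := by
    intro n
    calc Sseq n = S₀ * ∏ m ∈ Finset.range n, (1 - δ m) := rfl
      _ ≤ S₀ * 1 := mul_le_mul_of_nonneg_left (hprod n).2 hS0pos.le
      _ = S₀ := mul_one _
  have hSpos : ∀ n, 0 < Sseq n := fun n => lt_of_lt_of_le (by positivity) (hS2 n)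
  have hSsucc : ∀ n, Sseq (n+1) = (1 - δ n) * Sseq n := by
    intro n
    simp only [hSseqdef, Finset.prod_range_succ]
    ring
  -- G n fixes the origin
  have hGzero : ∀ n, G n 0 = 0 := by
    intro n
    induction n with
    | zero => rw [hG0]; rfl
    | succ n ih =>
      rw [hGsucc n]
      show g (n+1) (G n 0) = 0
      rw [ih]
      exact hg0 (n+1) (Nat.le_add_left 1 n)
  -- the key induction
  have key : ∀ n : ℕ, ⇑(L n) '' closedBall 0 (Sseq n) ⊆ G n '' ball 0 η := by
    intro n
    induction n with
    | zero =>
      rw [hL0, hG0, ContinuousLinearEquiv.coe_refl', image_id, image_id]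
      apply closedBall_subset_ball
      have : Sseq 0 = S₀ := by simp [hSseqdef]
      rw [this]
      linarith
    | succ n ih =>
      obtain ⟨U, hUo, hUsub, hUdiff, -⟩ := hinj n
      have hGn0 : G n 0 = 0 := hGzero n
      have h0U : (0 : EuclideanSpace ℂ (Fin k)) ∈ U := by
        apply hUsub
        refine Set.mem_union_right _ ⟨0, ?_, (L n).map_zero⟩
        simp [hη.le]
      have hgd0 : DifferentiableAt ℂ (g (n+1)) 0 :=
        hUdiff.differentiableAt (hUo.mem_nhds h0U)
      set A := fderiv ℂ (g (n + 1)) 0 with hAdef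
      have hA : HasFDerivAt (g (n + 1)) A 0 := hgd0.hasFDerivAt
      have hchain : (L (n+1) : EuclideanSpace ℂ (Fin k) →L[ℂ] EuclideanSpace ℂ (Fin k))
          = A.comp (L n : EuclideanSpace ℂ (Fin k) →L[ℂ] EuclideanSpace ℂ (Fin k)) := by
        refine (hL (n+1)).unique ?_
        rw [hGsucc n]
        have hA' : HasFDerivAt (g (n+1)) A (G n 0) := by rw [hGn0]; exact hA
        exact hA'.comp 0 (hL n)
      have hchain' : ∀ v, A ((L n) v) = (L (n+1)) v := by
        intro v
        have h1 := DFunLike.congr_fun hchain v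
        simpa using h1.symm
      -- the error map ψ and its properties
      set ψ : EuclideanSpace ℂ (Fin k) → EuclideanSpace ℂ (Fin k) :=
        fun v => g (n+1) ((L n) v) - (L (n+1)) v with hψdef
      set V : Set (EuclideanSpace ℂ (Fin k)) := ⇑(L n) ⁻¹' U with hVdef
      have hVo : IsOpen V := hUo.preimage (L n).continuous
      have hVb : closedBall 0 η ⊆ V := by
        intro v hv
        show (L n) v ∈ U
        exact hUsub (Set.mem_union_right _ ⟨v, hv, rfl⟩)
      have hψd : DifferentiableOn ℂ ψ V := by
        have h1 : DifferentiableOn ℂ (g (n+1) ∘ ⇑(L n)) V :=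
          hUdiff.comp ((L n).differentiable.differentiableOn) (fun v hv => hv)
        exact h1.sub ((L (n+1)).differentiable.differentiableOn)
      have hψD0 : HasFDerivAt ψ
          (0 : EuclideanSpace ℂ (Fin k) →L[ℂ] EuclideanSpace ℂ (Fin k)) 0 := by
        have h1 : HasFDerivAt (fun v => g (n+1) ((L n) v))
            ((L (n+1)) : EuclideanSpace ℂ (Fin k) →L[ℂ] EuclideanSpace ℂ (Fin k)) 0 := by
          rw [hchain]
          have hA'' : HasFDerivAt (g (n+1)) A ((L n) 0) := by
            rw [(L n).map_zero]; exact hA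
          exact hA''.comp 0 ((L n).hasFDerivAt)
        have h2 := h1.sub ((L (n+1)).hasFDerivAt)
        have h3 : HasFDerivAt ((fun v => g (n+1) ((L n) v)) - ⇑(L (n+1)))
            (0 : EuclideanSpace ℂ (Fin k) →L[ℂ] EuclideanSpace ℂ (Fin k)) 0 := by simpa using h2
        exact h3
      set M : ℝ := E * Real.exp (-(n:ℝ) * a) with hMdef
      have hMpos : 0 < M := by positivity
      have hψb : ∀ v : EuclideanSpace ℂ (Fin k), ‖v‖ ≤ η → ‖ψ v‖ ≤ M * ‖v‖ / η := by
        intro v hv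
        rcases eq_or_ne v 0 with rfl | hv0
        · have hz : ψ 0 = 0 := by
            show g (n+1) ((L n) 0) - (L (n+1)) 0 = 0
            rw [(L n).map_zero, (L (n+1)).map_zero, hg0 (n+1) (Nat.le_add_left 1 n), sub_zero]
          rw [hz]
          simp
        · have hvn : 0 < ‖v‖ := norm_pos_iff.mpr hv0
          have hγ : ‖v‖ / η ∈ Set.Ioc (0:ℝ) 1 :=
            ⟨by positivity, by rw [div_le_one hη]; exact hv⟩
          have hu : (L n) v ∈ ⇑(L n) '' closedBall 0 (‖v‖ / η * η) := by
            refine ⟨v, ?_, rfl⟩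
            rw [mem_closedBall_zero_iff, div_mul_cancel₀ _ hη.ne']
          have h1 := herr n (‖v‖ / η) hγ _ hu
          rw [← hAdef, hchain' v] at h1
          calc ‖ψ v‖ = ‖g (n+1) ((L n) v) - (L (n+1)) v‖ := rfl
            _ ≤ ‖v‖ / η * E * Real.exp (-(n:ℝ) * a) := h1
            _ = M * ‖v‖ / η := by rw [hMdef]; ring
      have hLip := aux_lip hη hMpos hVo hVb hψd hψD0 hψb (hSpos n) ((hSle n).trans hS0η)
      -- the conjugated map h and its linear approximation
      set h : EuclideanSpace ℂ (Fin k) → EuclideanSpace ℂ (Fin k) :=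
        fun v => (L (n+1)).symm (g (n+1) ((L n) v)) with hhdef
      have happrox : ApproximatesLinearOn h
          ((ContinuousLinearEquiv.refl ℂ (EuclideanSpace ℂ (Fin k)) :
            EuclideanSpace ℂ (Fin k) ≃L[ℂ] EuclideanSpace ℂ (Fin k)) :
            EuclideanSpace ℂ (Fin k) →L[ℂ] EuclideanSpace ℂ (Fin k))
          (closedBall 0 (Sseq n)) (Real.toNNReal (δ n)) := by
        intro x hx y hy
        have e1 : (L (n+1)).symm (ψ x - ψ y) = h x - h y - (x - y) := by
          simp only [hψdef, hhdef, map_sub, ContinuousLinearEquiv.symm_apply_apply]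
          abel
        have e2 : ‖h x - h y -
            ((ContinuousLinearEquiv.refl ℂ (EuclideanSpace ℂ (Fin k)) :
              EuclideanSpace ℂ (Fin k) ≃L[ℂ] EuclideanSpace ℂ (Fin k)) :
              EuclideanSpace ℂ (Fin k) →L[ℂ] EuclideanSpace ℂ (Fin k)) (x - y)‖
            = ‖(L (n+1)).symm (ψ x - ψ y)‖ := by
          rw [e1]
          simp
        rw [e2]
        have hkey : F * Real.exp ((n:ℝ) * b) * (40 * M * Sseq n / η ^ 2) ≤ δ n := by
          have hqn : Real.exp ((n:ℝ)*b) * Real.exp (-(n:ℝ)*a) = q ^ n := by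
            rw [← Real.exp_add, hqdef, ← Real.exp_nat_mul]
            congr 1
            ring
          calc F * Real.exp ((n:ℝ)*b) * (40 * M * Sseq n / η ^ 2)
              = 40 * E * F / η ^ 2 * Sseq n * (Real.exp ((n:ℝ)*b) * Real.exp (-(n:ℝ)*a)) := by
                rw [hMdef]; ring
            _ = 40 * E * F / η ^ 2 * Sseq n * q ^ n := by rw [hqn]
            _ ≤ 40 * E * F / η ^ 2 * S₀ * q ^ n := by
                have := hSle n
                gcongr
            _ = δ n := rfl
        calc ‖(L (n+1)).symm (ψ x - ψ y)‖
            ≤ ‖((L (n+1)).symm : EuclideanSpace ℂ (Fin k) →L[ℂ] EuclideanSpace ℂ (Fin k))‖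
              * ‖ψ x - ψ y‖ :=
              ((L (n+1)).symm : EuclideanSpace ℂ (Fin k) →L[ℂ]
                EuclideanSpace ℂ (Fin k)).le_opNorm _
          _ ≤ (F * Real.exp ((n:ℝ) * b)) * (40 * M * Sseq n / η ^ 2 * ‖x - y‖) :=
              mul_le_mul (hgrow n) (hLip x hx y hy) (norm_nonneg _) (by positivity)
          _ = (F * Real.exp ((n:ℝ) * b) * (40 * M * Sseq n / η ^ 2)) * ‖x - y‖ := by ring
          _ ≤ δ n * ‖x - y‖ := mul_le_mul_of_nonneg_right hkey (norm_nonneg _)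
          _ = (Real.toNNReal (δ n) : ℝ) * ‖x - y‖ := by
              rw [Real.coe_toNNReal _ (hδ0 n)]
      have h00 : h 0 = 0 := by
        show (L (n+1)).symm (g (n+1) ((L n) 0)) = 0
        rw [(L n).map_zero, hg0 (n+1) (Nat.le_add_left 1 n), map_zero]
      have hsurj := happrox.surjOn_closedBall_of_nonlinearRightInverse
        (ContinuousLinearEquiv.refl ℂ (EuclideanSpace ℂ (Fin k))).toNonlinearRightInverse
        (hSpos n).le (subset_refl _)
      have hnn : (((ContinuousLinearEquiv.refl ℂ
          (EuclideanSpace ℂ (Fin k))).toNonlinearRightInverse.nnnorm : ℝ)) = 1 := by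
        show ((‖(((ContinuousLinearEquiv.refl ℂ (EuclideanSpace ℂ (Fin k))).symm :
          EuclideanSpace ℂ (Fin k) →L[ℂ] EuclideanSpace ℂ (Fin k)))‖₊ : ℝ)) = 1
        rw [coe_nnnorm, ContinuousLinearEquiv.refl_symm, ContinuousLinearEquiv.coe_refl]
        exact ContinuousLinearMap.norm_id
      rw [h00, hnn, Real.coe_toNNReal _ (hδ0 n), inv_one] at hsurj
      rintro p ⟨w, hw, rfl⟩
      rw [mem_closedBall_zero_iff] at hw
      have hw2 : w ∈ closedBall (0 : EuclideanSpace ℂ (Fin k)) ((1 - δ n) * Sseq n) := by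
        rw [mem_closedBall_zero_iff]
        calc ‖w‖ ≤ Sseq (n+1) := hw
          _ = (1 - δ n) * Sseq n := hSsucc n
      obtain ⟨v, hv, hvw⟩ := hsurj hw2
      have hLw : (L (n+1)) w = g (n+1) ((L n) v) := by
        rw [← hvw]
        exact (L (n+1)).apply_symm_apply _
      obtain ⟨x, hxball, hGx⟩ := ih ⟨v, hv, rfl⟩
      refine ⟨x, hxball, ?_⟩
      rw [hGsucc n]
      show g (n+1) (G n x) = (L (n+1)) w
      rw [hGx]
      exact hLw.symm
  refine ⟨S₀ / 2, by positivity, by linarith, ?_⟩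
  rintro n p ⟨w, hw, rfl⟩
  apply key n
  refine ⟨w, ?_, rfl⟩
  rw [mem_closedBall_zero_iff]
  have h1 : ‖w‖ < S₀ / 2 := mem_ball_zero_iff.mp hw
  linarith [hS2 n]
end

section
/- Let k ≥ 1, let M and A be invertible continuous ℂ-linear maps from ℂ^k to ℂ^k, let s > 0, ν > 0, and let 0 < s' ≤ s − ‖(A∘M)^{−1}‖·ν. Let g be holomorphic and injective on an open set containing M(B̄(0,s)) and suppose ‖g(u) − A(u)‖ ≤ ν for all u ∈ M(B̄(0,s)). Then (A∘M)(B(0,s')) ⊆ g(M(B(0,s))). -/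
open Metric Set

section EarleHamilton

variable {E : Type*} [NormedAddCommGroup E] [NormedSpace ℂ E]

/-- The set of candidate derivative norms for the Carathéodory-type infinitesimal metric
on the ball `B(0,s)`. -/
def compS (s : ℝ) (x v : E) : Set ℝ :=
  {r | ∃ f : E → ℂ, DifferentiableOn ℂ f (ball 0 s) ∧
      (∀ w ∈ ball (0 : E) s, f w ∈ ball (0 : ℂ) 1) ∧ r = ‖fderiv ℂ f x v‖}

/-- Carathéodory-type infinitesimal pseudo-metric on `B(0,s)`. -/
noncomputable def cbeta (s : ℝ) (x v : E) : ℝ := sSup (compS s x v)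

lemma compS_nonempty (s : ℝ) (x v : E) : (compS s x v).Nonempty := by
  refine ⟨0, fun _ => 0, differentiableOn_const _, fun w _ => by simp, ?_⟩
  simp

lemma compS_le (s : ℝ) {x : E} (hx : x ∈ ball (0 : E) s) (v : E) :
    ∀ r ∈ compS s x v, r ≤ 2 * ‖v‖ / (s - ‖x‖) := by
  rintro r ⟨f, hfd, hfm, rfl⟩
  have hxs : ‖x‖ < s := mem_ball_zero_iff.1 hx
  have hdx : DifferentiableAt ℂ f x := hfd.differentiableAt (isOpen_ball.mem_nhds hx)
  rcases eq_or_ne v 0 with rfl | hv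
  · simp [le_div_iff₀ (by linarith : (0:ℝ) < s - ‖x‖)]
  · have hv0 : 0 < ‖v‖ := norm_pos_iff.2 hv
    set R₁ : ℝ := (s - ‖x‖) / ‖v‖ with hR₁
    have hR₁0 : 0 < R₁ := div_pos (by linarith) hv0
    set F : ℂ → ℂ := fun lam => f (x + lam • v) with hF
    have hmem : ∀ lam ∈ ball (0 : ℂ) R₁, x + lam • v ∈ ball (0 : E) s := by
      intro lam hlam
      have : ‖lam‖ < R₁ := mem_ball_zero_iff.1 hlam
      have : ‖x + lam • v‖ ≤ ‖x‖ + ‖lam‖ * ‖v‖ := by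
        simpa [norm_smul] using norm_add_le x (lam • v)
      refine mem_ball_zero_iff.2 (lt_of_le_of_lt this ?_)
      have h2 : ‖lam‖ * ‖v‖ < R₁ * ‖v‖ := by
        exact mul_lt_mul_of_pos_right (by assumption) hv0
      rw [hR₁, div_mul_cancel₀ _ hv0.ne'] at h2
      linarith
    have hFd : DifferentiableOn ℂ F (ball 0 R₁) := by
      apply hfd.comp
      · intro lam _
        exact (differentiableAt_id.smul_const v).const_add x |>.differentiableWithinAt
      · intro lam hlam; exact hmem lam hlam
    have hFm : MapsTo F (ball (0:ℂ) R₁) (ball (F 0) 2) := by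
      intro lam hlam
      have h1 : F lam ∈ ball (0:ℂ) 1 := hfm _ (hmem lam hlam)
      have h0 : F 0 ∈ ball (0:ℂ) 1 := hfm _ (hmem 0 (mem_ball_self hR₁0))
      have := mem_ball_zero_iff.1 h1
      have := mem_ball_zero_iff.1 h0
      have : dist (F lam) (F 0) < 2 := by
        calc dist (F lam) (F 0) ≤ ‖F lam‖ + ‖F 0‖ := dist_le_norm_add_norm _ _
        _ < 2 := by linarith
      exact mem_ball.2 this
    have hder : HasDerivAt F (fderiv ℂ f x v) 0 := by
      have h1 : HasDerivAt (fun lam : ℂ => x + lam • v) v 0 := by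
        simpa using ((hasDerivAt_id (0:ℂ)).smul_const v).const_add x
      have h2 : HasFDerivAt f (fderiv ℂ f x) ((fun lam : ℂ => x + lam • v) 0) := by
        simpa using hdx.hasFDerivAt
      exact h2.comp_hasDerivAt 0 h1
    have := Complex.norm_deriv_le_div_of_mapsTo_ball hFd (hFm.mono_right ball_subset_closedBall) hR₁0
    rw [hder.deriv] at this
    calc ‖fderiv ℂ f x v‖ ≤ 2 / R₁ := this
      _ = 2 * ‖v‖ / (s - ‖x‖) := by
        rw [hR₁]; field_simp

lemma compS_bddAbove (s : ℝ) {x : E} (hx : x ∈ ball (0 : E) s) (v : E) :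
    BddAbove (compS s x v) := ⟨_, compS_le s hx v⟩

lemma cbeta_le (s : ℝ) {x : E} (hx : x ∈ ball (0 : E) s) (v : E) :
    cbeta s x v ≤ 2 * ‖v‖ / (s - ‖x‖) :=
  csSup_le (compS_nonempty s x v) (compS_le s hx v)

lemma cbeta_nonneg (s : ℝ) {x : E} (hx : x ∈ ball (0 : E) s) (v : E) :
    0 ≤ cbeta s x v :=
  le_csSup (compS_bddAbove s hx v)
    ⟨fun _ => 0, differentiableOn_const _, fun w _ => by simp, by simp⟩

lemma le_cbeta (s : ℝ) (hs : 0 < s) {x : E} (hx : x ∈ ball (0 : E) s) (v : E) :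
    ‖v‖ / s ≤ cbeta s x v := by
  rcases eq_or_ne v 0 with rfl | hv
  · have h0 : (0:ℝ) ∈ compS s x (0:E) := ⟨fun _ => 0, differentiableOn_const _,
      fun w _ => by simp, by simp⟩
    simpa [cbeta] using le_csSup (compS_bddAbove s hx 0) h0
  · obtain ⟨l, hl1, hlv⟩ := exists_dual_vector ℂ v (norm_ne_zero_iff.2 hv)
    set c : E →L[ℂ] ℂ := ((s : ℂ)⁻¹) • l with hc
    have hmem : (‖v‖ / s : ℝ) ∈ compS s x v := by
      refine ⟨⇑c, c.differentiable.differentiableOn, ?_, ?_⟩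
      · intro w hw
        have hw' : ‖w‖ < s := mem_ball_zero_iff.1 hw
        have : ‖c w‖ ≤ s⁻¹ * ‖w‖ := by
          rw [hc]
          simp only [ContinuousLinearMap.smul_apply, norm_smul]
          gcongr
          · simp [abs_of_nonneg hs.le]
          · calc ‖l w‖ ≤ ‖l‖ * ‖w‖ := l.le_opNorm w
              _ = ‖w‖ := by rw [hl1, one_mul]
        refine mem_ball_zero_iff.2 (lt_of_le_of_lt this ?_)
        rw [inv_mul_lt_iff₀ hs, mul_one]
        exact hw'
      · rw [c.fderiv]
        rw [hc]
        simp only [ContinuousLinearMap.smul_apply, norm_smul, hlv]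
        rw [div_eq_inv_mul]
        simp [abs_of_nonneg hs.le, Complex.norm_real, abs_of_nonneg (norm_nonneg v)]
    exact le_csSup (compS_bddAbove s hx v) hmem

/-- Earle–Hamilton contraction step. -/
lemma cbeta_contract {s η t : ℝ} {z : E} {G : E → E}
    (hη : 0 < η) (ht : 0 < t) (ht2 : ‖z‖ + η + 2 * t * η < s)
    (hG : DifferentiableOn ℂ G (ball 0 s))
    (hm : ∀ w ∈ ball (0 : E) s, G w ∈ closedBall z η)
    {x : E} (hx : x ∈ ball (0 : E) s) (v : E) :
    cbeta s (G x) (fderiv ℂ G x v) ≤ (1 + t)⁻¹ * cbeta s x v := by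
  have hzη : ‖z‖ + η < s := by nlinarith
  have hsub : closedBall z η ⊆ ball (0 : E) s := by
    intro w hw
    have : ‖w - z‖ ≤ η := mem_closedBall_iff_norm.1 hw
    have : ‖w‖ ≤ ‖w - z‖ + ‖z‖ := by simpa using norm_add_le (w - z) z
    exact mem_ball_zero_iff.2 (by linarith [mem_closedBall_iff_norm.1 hw])
  have hGx : G x ∈ ball (0 : E) s := hsub (hm x hx)
  have hGdx : DifferentiableAt ℂ G x := hG.differentiableAt (isOpen_ball.mem_nhds hx)
  refine csSup_le (compS_nonempty s (G x) (fderiv ℂ G x v)) ?_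
  rintro r ⟨f, hfd, hfm, rfl⟩
  -- the dilated map
  set Φ : E → E := fun w => (1 + (t : ℂ)) • G w - (t : ℂ) • G x with hΦ
  have hΦx : Φ x = G x := by
    rw [hΦ]; simp only [add_smul, one_smul]; abel
  have hΦmem : ∀ w ∈ ball (0 : E) s, Φ w ∈ ball (0 : E) s := by
    intro w hw
    have h1 : ‖G w - z‖ ≤ η := mem_closedBall_iff_norm.1 (hm w hw)
    have h2 : ‖G x - z‖ ≤ η := mem_closedBall_iff_norm.1 (hm x hx)
    have heq : Φ w - z = (G w - z) + (t : ℂ) • ((G w - z) - (G x - z)) := by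
      rw [hΦ]; simp only [add_smul, one_smul, smul_sub]; abel
    have hb : ‖Φ w - z‖ ≤ η + t * (2 * η) := by
      rw [heq]
      have h3 : ‖(G w - z) - (G x - z)‖ ≤ 2 * η := by
        calc ‖(G w - z) - (G x - z)‖ ≤ ‖G w - z‖ + ‖G x - z‖ := norm_sub_le _ _
          _ ≤ 2 * η := by linarith
      have h4 := norm_add_le (G w - z) ((t : ℂ) • ((G w - z) - (G x - z)))
      have h5 : ‖(t : ℂ) • ((G w - z) - (G x - z))‖ = t * ‖(G w - z) - (G x - z)‖ := by
        rw [norm_smul]; simp [Complex.norm_real, abs_of_nonneg ht.le]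
      rw [h5] at h4
      nlinarith [norm_nonneg ((G w - z) - (G x - z))]
    have : ‖Φ w‖ ≤ ‖Φ w - z‖ + ‖z‖ := by simpa using norm_add_le (Φ w - z) z
    refine mem_ball_zero_iff.2 ?_
    have : ‖Φ w‖ ≤ η + t * (2 * η) + ‖z‖ := by linarith
    nlinarith
  have hΦd : DifferentiableOn ℂ Φ (ball 0 s) := by
    rw [hΦ]
    exact (hG.const_smul _).sub (differentiableOn_const _)
  have hΦdx : DifferentiableAt ℂ Φ x := hΦd.differentiableAt (isOpen_ball.mem_nhds hx)
  have hfdGx : DifferentiableAt ℂ f (G x) := hfd.differentiableAt (isOpen_ball.mem_nhds hGx)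
  -- f ∘ Φ is a competitor at (x, v)
  have hcomp_d : DifferentiableOn ℂ (f ∘ Φ) (ball 0 s) :=
    hfd.comp hΦd (fun w hw => hΦmem w hw)
  have hcomp_m : ∀ w ∈ ball (0 : E) s, (f ∘ Φ) w ∈ ball (0 : ℂ) 1 := fun w hw =>
    hfm _ (hΦmem w hw)
  -- compute the derivative of f ∘ Φ
  have hΦder : fderiv ℂ Φ x = (1 + (t : ℂ)) • fderiv ℂ G x := by
    have h : HasFDerivAt Φ ((1 + (t : ℂ)) • fderiv ℂ G x) x := by
      rw [hΦ]
      exact (hGdx.hasFDerivAt.const_smul _).sub_const _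
    exact h.fderiv
  have hkey : fderiv ℂ (f ∘ Φ) x v = (1 + (t : ℂ)) • fderiv ℂ f (G x) (fderiv ℂ G x v) := by
    have h1 : fderiv ℂ (f ∘ Φ) x = (fderiv ℂ f (Φ x)).comp (fderiv ℂ Φ x) :=
      fderiv_comp x (by rw [hΦx]; exact hfdGx) hΦdx
    rw [h1, hΦx, hΦder]
    simp [ContinuousLinearMap.comp_apply]
  have hnorm : ‖fderiv ℂ (f ∘ Φ) x v‖ = (1 + t) * ‖fderiv ℂ f (G x) (fderiv ℂ G x v)‖ := by
    rw [hkey, norm_smul]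
    congr 1
    have h6 : (1 + (t:ℂ)) = ((1 + t : ℝ) : ℂ) := by push_cast; ring
    rw [h6, Complex.norm_real, Real.norm_eq_abs, abs_of_nonneg (by linarith : (0:ℝ) ≤ 1 + t)]
  have hmemS : (1 + t) * ‖fderiv ℂ f (G x) (fderiv ℂ G x v)‖ ∈ compS s x v := by
    exact ⟨f ∘ Φ, hcomp_d, hcomp_m, hnorm.symm⟩
  have hle : (1 + t) * ‖fderiv ℂ f (G x) (fderiv ℂ G x v)‖ ≤ cbeta s x v :=
    le_csSup (compS_bddAbove s hx v) hmemS
  rw [inv_mul_eq_div, le_div_iff₀ (by linarith : (0:ℝ) < 1 + t)]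
  linarith [hle]

/-- Earle–Hamilton-type fixed point theorem: a holomorphic map of the ball `B(0,s)` into a
closed ball `B̄(z,η)` strictly inside it has a fixed point. -/
theorem holo_fixed_point [CompleteSpace E] {s η : ℝ} {z : E} {G : E → E}
    (hη : 0 < η) (hzs : ‖z‖ + η < s)
    (hG : DifferentiableOn ℂ G (ball 0 s))
    (hm : ∀ w ∈ ball (0 : E) s, G w ∈ closedBall z η) :
    ∃ x ∈ closedBall z η, G x = x := by
  have hs : 0 < s := lt_of_le_of_lt (by positivity) hzs
  set δ : ℝ := s - ‖z‖ - η with hδ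
  have hδ0 : 0 < δ := by simp [hδ]; linarith
  set t : ℝ := δ / (4 * η) with htdef
  have ht : 0 < t := div_pos hδ0 (by linarith)
  have ht2 : ‖z‖ + η + 2 * t * η < s := by
    have : 2 * t * η = δ / 2 := by
      rw [htdef]; field_simp; ring
    rw [this]; simp [hδ]; linarith
  set K : ℝ := (1 + t)⁻¹ with hK
  have hK0 : 0 < K := by positivity
  have hK1 : K < 1 := by
    rw [hK]; rw [inv_lt_one_iff₀]; right; linarith
  have hsub : closedBall z η ⊆ ball (0 : E) s := by
    intro w hw
    have h1 : ‖w - z‖ ≤ η := mem_closedBall_iff_norm.1 hw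
    have h2 : ‖w‖ ≤ ‖w - z‖ + ‖z‖ := by simpa using norm_add_le (w - z) z
    exact mem_ball_zero_iff.2 (by linarith)
  -- iterates
  have key : ∀ n : ℕ, ∀ p ∈ ball (0 : E) s,
      DifferentiableAt ℂ (G^[n]) p ∧ G^[n] p ∈ ball (0 : E) s ∧
      ∀ v, cbeta s (G^[n] p) (fderiv ℂ (G^[n]) p v) ≤ K ^ n * cbeta s p v := by
    intro n
    induction n with
    | zero =>
      intro p hp
      refine ⟨differentiableAt_id, by simpa using hp, ?_⟩
      intro v
      simp [fderiv_id']
    | succ n ih =>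
      intro p hp
      obtain ⟨hd, hmem, hb⟩ := ih p hp
      have hdG : DifferentiableAt ℂ G (G^[n] p) :=
        hG.differentiableAt (isOpen_ball.mem_nhds hmem)
      have hd' : DifferentiableAt ℂ (G^[n+1]) p := by
        rw [Function.iterate_succ']
        exact hdG.comp p hd
      have hmem' : G^[n+1] p ∈ ball (0 : E) s := by
        rw [Function.iterate_succ', Function.comp_apply]
        exact hsub (hm _ hmem)
      refine ⟨hd', hmem', ?_⟩
      intro v
      have hchain : fderiv ℂ (G^[n+1]) p v
          = fderiv ℂ G (G^[n] p) (fderiv ℂ (G^[n]) p v) := by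
        rw [Function.iterate_succ']
        rw [fderiv_comp p hdG hd]
        simp
      rw [Function.iterate_succ_apply', hchain]
      calc cbeta s (G (G^[n] p)) (fderiv ℂ G (G^[n] p) (fderiv ℂ (G^[n]) p v))
          ≤ K * cbeta s (G^[n] p) (fderiv ℂ (G^[n]) p v) :=
            cbeta_contract hη ht ht2 hG hm hmem _
        _ ≤ K * (K ^ n * cbeta s p v) := by
            exact mul_le_mul_of_nonneg_left (hb v) hK0.le
        _ = K ^ (n+1) * cbeta s p v := by ring
  -- derivative norm bound on the closed ball
  have hop : ∀ n : ℕ, ∀ p ∈ closedBall z η, ‖fderiv ℂ (G^[n]) p‖ ≤ 2 * s / δ * K ^ n := by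
    intro n p hp
    have hp' : p ∈ ball (0 : E) s := hsub hp
    obtain ⟨hd, hmem, hb⟩ := key n p hp'
    refine ContinuousLinearMap.opNorm_le_bound _ (by positivity) ?_
    intro v
    have h1 : ‖fderiv ℂ (G^[n]) p v‖ / s ≤ cbeta s (G^[n] p) (fderiv ℂ (G^[n]) p v) :=
      le_cbeta s hs hmem _
    have h2 : cbeta s (G^[n] p) (fderiv ℂ (G^[n]) p v) ≤ K ^ n * cbeta s p v := hb v
    have h3 : cbeta s p v ≤ 2 * ‖v‖ / (s - ‖p‖) := cbeta_le s hp' v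
    have h4 : s - ‖p‖ ≥ δ := by
      have h5 : ‖p - z‖ ≤ η := mem_closedBall_iff_norm.1 hp
      have h6 : ‖p‖ ≤ ‖p - z‖ + ‖z‖ := by simpa using norm_add_le (p - z) z
      simp only [hδ]; linarith
    have h7 : 2 * ‖v‖ / (s - ‖p‖) ≤ 2 * ‖v‖ / δ := by
      apply div_le_div_of_nonneg_left (by positivity) hδ0 h4
    have h8 : ‖fderiv ℂ (G^[n]) p v‖ ≤ s * (K ^ n * (2 * ‖v‖ / δ)) := by
      rw [div_le_iff₀ hs] at h1
      calc ‖fderiv ℂ (G^[n]) p v‖ ≤ cbeta s (G^[n] p) (fderiv ℂ (G^[n]) p v) * s := h1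
        _ ≤ K ^ n * (2 * ‖v‖ / δ) * s := by
            apply mul_le_mul_of_nonneg_right _ hs.le
            calc cbeta s (G^[n] p) (fderiv ℂ (G^[n]) p v) ≤ K ^ n * cbeta s p v := h2
              _ ≤ K ^ n * (2 * ‖v‖ / δ) := by
                  exact mul_le_mul_of_nonneg_left (h3.trans h7) (by positivity)
        _ = s * (K ^ n * (2 * ‖v‖ / δ)) := by ring
    calc ‖fderiv ℂ (G^[n]) p v‖ ≤ s * (K ^ n * (2 * ‖v‖ / δ)) := h8
      _ = 2 * s / δ * K ^ n * ‖v‖ := by field_simp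
  -- the orbit of z is Cauchy
  have hzmem : z ∈ closedBall z η := mem_closedBall_self hη.le
  have hGz : G z ∈ closedBall z η := hm z (hsub hzmem)
  set C : ℝ := 2 * s / δ * ‖G z - z‖ with hC
  have hdist : ∀ n : ℕ, dist (G^[n] z) (G^[n+1] z) ≤ C * K ^ n := by
    intro n
    have hmean : ‖G^[n] (G z) - G^[n] z‖ ≤ 2 * s / δ * K ^ n * ‖G z - z‖ := by
      apply Convex.norm_image_sub_le_of_norm_fderiv_le
        (fun w hw => (key n w (hsub hw)).1) (fun w hw => hop n w hw)
        (convex_closedBall z η) hzmem hGz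
    rw [dist_eq_norm, Function.iterate_succ_apply]
    rw [norm_sub_rev]
    calc ‖G^[n] (G z) - G^[n] z‖ ≤ 2 * s / δ * K ^ n * ‖G z - z‖ := hmean
      _ = C * K ^ n := by rw [hC]; ring
  have hcauchy : CauchySeq (fun n => G^[n] z) := cauchySeq_of_le_geometric K C hK1 hdist
  obtain ⟨x, hx⟩ := cauchySeq_tendsto_of_complete hcauchy
  have hxball : x ∈ closedBall z η := by
    apply IsClosed.mem_of_tendsto Metric.isClosed_closedBall hx
    filter_upwards [Filter.eventually_ge_atTop 1] with n hn
    obtain ⟨m, rfl⟩ := Nat.exists_eq_add_of_le hn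
    rw [add_comm, Function.iterate_succ_apply']
    exact hm _ (key m z (hsub hzmem)).2.1
  refine ⟨x, hxball, ?_⟩
  have hcont : ContinuousAt G x :=
    (hG.differentiableAt (isOpen_ball.mem_nhds (hsub hxball))).continuousAt
  have h1 : Filter.Tendsto (fun n => G (G^[n] z)) Filter.atTop (nhds (G x)) :=
    hcont.tendsto.comp hx
  have h2 : Filter.Tendsto (fun n => G^[n+1] z) Filter.atTop (nhds x) :=
    hx.comp (Filter.tendsto_add_atTop_nat 1)
  have h3 : (fun n => G (G^[n] z)) = fun n => G^[n+1] z := by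
    funext n; rw [Function.iterate_succ_apply']
  rw [h3] at h1
  exact tendsto_nhds_unique h1 h2

end EarleHamilton

/-- A holomorphic map of the ball `B(0,s)` which is `η`-close to the identity covers the
smaller ball `B(0, s - η)`. -/
theorem approx_id_cover {E : Type*} [NormedAddCommGroup E] [NormedSpace ℂ E]
    [CompleteSpace E] {s η : ℝ} {h : E → E} {z : E}
    (hη : 0 < η) (hzη : ‖z‖ + η < s)
    (hd : DifferentiableOn ℂ h (ball 0 s))
    (hb : ∀ x ∈ ball (0 : E) s, ‖h x - x‖ ≤ η) :
    ∃ x ∈ ball (0 : E) s, h x = z := by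
  have hG : DifferentiableOn ℂ (fun x => z + x - h x) (ball 0 s) :=
    (differentiable_id.const_add z).differentiableOn.sub hd
  have hmaps : ∀ x ∈ ball (0 : E) s, (fun x => z + x - h x) x ∈ closedBall z η := by
    intro x hx
    rw [mem_closedBall_iff_norm]
    have : z + x - h x - z = -(h x - x) := by abel
    rw [this, norm_neg]
    exact hb x hx
  obtain ⟨x, hxb, hxfix⟩ := holo_fixed_point hη hzη hG hmaps
  have hxs : x ∈ ball (0 : E) s := by
    have h1 : ‖x - z‖ ≤ η := mem_closedBall_iff_norm.1 hxb
    have h2 : ‖x‖ ≤ ‖x - z‖ + ‖z‖ := by simpa using norm_add_le (x - z) z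
    exact mem_ball_zero_iff.2 (by linarith)
  refine ⟨x, hxs, ?_⟩
  have : z + x - h x = x := hxfix
  have h3 : h x = z := by
    have := congrArg (fun u => u + h x - x) this
    simpa using this.symm
  exact h3

/-- The single inductive step of the proof of Théorème 1.3: if `g` is
holomorphic and injective on a neighbourhood of `M(B̄(0,s))`, differs from the
invertible continuous `ℂ`-linear map `A` by at most `ν` there, and
`0 < s' ≤ s - ‖(A ∘ M)⁻¹‖ ν`, then `(A ∘ M)(B(0,s')) ⊆ g(M(B(0,s)))`. -/
theorem inductive_step
    (k : ℕ) (hk : 1 ≤ k)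
    (M A : EuclideanSpace ℂ (Fin k) ≃L[ℂ] EuclideanSpace ℂ (Fin k))
    (s ν s' : ℝ) (hs : 0 < s) (hν : 0 < ν) (hs'0 : 0 < s')
    (hs' : s' ≤ s -
      ‖((M.trans A).symm : EuclideanSpace ℂ (Fin k) →L[ℂ] EuclideanSpace ℂ (Fin k))‖ * ν)
    (g : EuclideanSpace ℂ (Fin k) → EuclideanSpace ℂ (Fin k))
    (hg : ∃ U : Set (EuclideanSpace ℂ (Fin k)), IsOpen U ∧
      ⇑M '' closedBall 0 s ⊆ U ∧ DifferentiableOn ℂ g U ∧ Set.InjOn g U)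
    (hclose : ∀ u ∈ ⇑M '' closedBall (0 : EuclideanSpace ℂ (Fin k)) s, ‖g u - A u‖ ≤ ν) :
    ⇑(M.trans A) '' ball 0 s' ⊆ g '' (⇑M '' ball 0 s) := by
  obtain ⟨U, hUopen, hUsub, hgdiff, -⟩ := hg
  set L : EuclideanSpace ℂ (Fin k) →L[ℂ] EuclideanSpace ℂ (Fin k) :=
    ((M.trans A).symm : EuclideanSpace ℂ (Fin k) →L[ℂ] EuclideanSpace ℂ (Fin k)) with hLdef
  -- positivity of ‖L‖
  have hLpos : 0 < ‖L‖ := by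
    rcases (norm_nonneg L).lt_or_eq with hpos | heq
    · exact hpos
    · exfalso
      have hL0 : L = 0 := (ContinuousLinearMap.opNorm_zero_iff L).1 heq.symm
      set w : EuclideanSpace ℂ (Fin k) := EuclideanSpace.single ⟨0, hk⟩ (1 : ℂ) with hw
      have hw1 : ‖w‖ = 1 := by
        rw [hw, EuclideanSpace.norm_single]; norm_num
      have : L ((M.trans A) w) = w := (M.trans A).symm_apply_apply w
      rw [hL0] at this
      simp at this
      rw [← this] at hw1
      simp at hw1
  have hMmem : ∀ x ∈ ball (0 : EuclideanSpace ℂ (Fin k)) s, M x ∈ U := fun x hx =>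
    hUsub ⟨x, ball_subset_closedBall hx, rfl⟩
  -- the map h = L ∘ g ∘ M
  have hd : DifferentiableOn ℂ (fun x => L (g (M x)))
      (ball (0 : EuclideanSpace ℂ (Fin k)) s) := by
    have h1 : DifferentiableOn ℂ (fun x => g (M x))
        (ball (0 : EuclideanSpace ℂ (Fin k)) s) := by
      have hMdiff : Differentiable ℂ
          (⇑M : EuclideanSpace ℂ (Fin k) → EuclideanSpace ℂ (Fin k)) :=
        (M : EuclideanSpace ℂ (Fin k) →L[ℂ] EuclideanSpace ℂ (Fin k)).differentiable
      apply hgdiff.comp hMdiff.differentiableOn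
      intro x hx
      exact hMmem x hx
    exact L.differentiable.comp_differentiableOn h1
  have hb : ∀ x ∈ ball (0 : EuclideanSpace ℂ (Fin k)) s,
      ‖L (g (M x)) - x‖ ≤ ‖L‖ * ν := by
    intro x hx
    have h1 : ‖g (M x) - A (M x)‖ ≤ ν :=
      hclose _ ⟨x, ball_subset_closedBall hx, rfl⟩
    have h2 : L (A (M x)) = x := by
      have h3 : (M.trans A) x = A (M x) := by
        simp [ContinuousLinearEquiv.trans_apply]
      rw [← h3]
      exact (M.trans A).symm_apply_apply x
    calc ‖L (g (M x)) - x‖ = ‖L (g (M x) - A (M x))‖ := by rw [L.map_sub, h2]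
      _ ≤ ‖L‖ * ‖g (M x) - A (M x)‖ := L.le_opNorm _
      _ ≤ ‖L‖ * ν := mul_le_mul_of_nonneg_left h1 (norm_nonneg L)
  rintro y ⟨z, hz, rfl⟩
  have hzη : ‖z‖ + ‖L‖ * ν < s := by
    have h1 : ‖z‖ < s' := mem_ball_zero_iff.1 hz
    have h2 : s' ≤ s - ‖L‖ * ν := hs'
    linarith
  obtain ⟨x, hxs, hx⟩ := approx_id_cover (mul_pos hLpos hν) hzη hd hb
  refine ⟨M x, ⟨x, hxs, rfl⟩, ?_⟩
  -- from L (g (M x)) = z conclude g (M x) = (M.trans A) z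
  have h4 : g (M x) = (M.trans A) z := by
    have := congrArg (M.trans A) hx
    rwa [hLdef, ContinuousLinearEquiv.coe_coe, (M.trans A).apply_symm_apply] at this
  exact h4.symm ▸ rfl
end

section
/- Let k ≥ 1, let U ⊆ ℂ^k be open, let f : U → ℂ^k be holomorphic and injective on U, let m denote Lebesgue measure on ℂ^k (identified with ℝ^{2k}), let φ : ℂ^k → [0,∞) be locally m-integrable, and let D > 0. Suppose that ∫_{f(A)} φ dm = D · ∫_A φ dm for every Borel set A ⊆ U. Then for m-almost every x ∈ U one has φ(f(x)) · |det_ℂ(d_x f)|² = D · φ(x), where det_ℂ(d_x f) denotes the determinant of the complex differential of f at x. -/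
open MeasureTheory
open Set
open scoped ENNReal

lemma det_blocks {k : ℕ} (A B : Matrix (Fin k) (Fin k) ℂ) :
    (Matrix.fromBlocks A (-B) B A).det = (A + Complex.I • B).det * (A - Complex.I • B).det := by
  have h : (Matrix.fromBlocks (1 : Matrix (Fin k) (Fin k) ℂ) (Complex.I • 1) 0 1 *
      Matrix.fromBlocks A (-B) B A) *
      Matrix.fromBlocks (1 : Matrix (Fin k) (Fin k) ℂ) (-(Complex.I • 1)) 0 1 =
      Matrix.fromBlocks (A + Complex.I • B) 0 B (A - Complex.I • B) := by
    rw [Matrix.fromBlocks_multiply, Matrix.fromBlocks_multiply]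
    refine Matrix.fromBlocks_inj.mpr ⟨?_, ?_, ?_, ?_⟩ <;>
      · simp [Matrix.smul_mul, Matrix.mul_smul, smul_smul, Complex.I_mul_I, sub_eq_add_neg]
        try abel
  have hd := congrArg Matrix.det h
  rw [Matrix.det_mul, Matrix.det_mul, Matrix.det_fromBlocks_zero₂₁,
    Matrix.det_fromBlocks_zero₂₁, Matrix.det_fromBlocks_zero₁₂, Matrix.det_one, one_mul,
    mul_one] at hd
  simpa using hd

lemma det_restrictScalars_complex {k : ℕ} (T : (Fin k → ℂ) →ₗ[ℂ] (Fin k → ℂ)) :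
    LinearMap.det (T.restrictScalars ℝ) = Complex.normSq (LinearMap.det T) := by
  classical
  set c : Module.Basis (Fin k) ℂ (Fin k → ℂ) := Pi.basisFun ℂ (Fin k) with hc
  set b : Module.Basis (Fin 2) ℝ ℂ := Complex.basisOneI with hb
  set rb : Module.Basis (Fin 2 × Fin k) ℝ (Fin k → ℂ) := b.smulTower c with hrb
  set M : Matrix (Fin k) (Fin k) ℂ := LinearMap.toMatrix c c T with hM
  set A : Matrix (Fin k) (Fin k) ℝ := fun i j => (M i j).re with hA
  set B : Matrix (Fin k) (Fin k) ℝ := fun i j => (M i j).im with hB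
  set e : (Fin 2 × Fin k) ≃ (Fin k ⊕ Fin k) :=
    (finTwoEquiv.prodCongr (Equiv.refl (Fin k))).trans (Equiv.boolProdEquivSum (Fin k)) with he
  have key : LinearMap.toMatrix rb rb (T.restrictScalars ℝ) =
      (Matrix.fromBlocks A (-B) B A).submatrix e e := by
    ext ⟨i, l⟩ ⟨i', j⟩
    rw [LinearMap.toMatrix_apply]
    have h1 : rb (i', j) = b i' • c j := Module.Basis.smulTower_apply b c (i', j)
    have h2 : (T.restrictScalars ℝ) (b i' • c j) = b i' • T (c j) := T.map_smul _ _
    have h3 : rb.repr (b i' • T (c j)) (i, l) = b.repr (c.repr (b i' • T (c j)) l) i :=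
      Module.Basis.smulTower_repr b c _ _
    have h4 : c.repr (b i' • T (c j)) l = b i' * M l j := by
      have h5 : c.repr (b i' • T (c j)) = b i' • c.repr (T (c j)) :=
        (c.repr).map_smul _ _
      rw [h5, Finsupp.smul_apply, smul_eq_mul, hM, LinearMap.toMatrix_apply]
    rw [h1, h2, h3, h4]
    fin_cases i <;> fin_cases i' <;>
      simp [Matrix.submatrix_apply, he, hA, hB, Complex.coe_basisOneI_repr, hb, finTwoEquiv,
        Matrix.fromBlocks_apply₁₁, Matrix.fromBlocks_apply₁₂, Matrix.fromBlocks_apply₂₁,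
        Matrix.fromBlocks_apply₂₂, Complex.coe_basisOneI, Matrix.neg_apply, Matrix.fromBlocks, Pi.neg_apply] <;> rfl
  have hdetR : LinearMap.det (T.restrictScalars ℝ) = (Matrix.fromBlocks A (-B) B A).det := by
    rw [← LinearMap.det_toMatrix rb, key, Matrix.det_submatrix_equiv_self]
  have hmap : (Matrix.fromBlocks A (-B) B A).map (Complex.ofRealHom) =
      Matrix.fromBlocks (A.map Complex.ofRealHom) (-(B.map Complex.ofRealHom))
        (B.map Complex.ofRealHom) (A.map Complex.ofRealHom) := by
    ext (i|i) (j|j) <;> simp [Matrix.fromBlocks_apply₁₁, Matrix.fromBlocks_apply₁₂,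
      Matrix.fromBlocks_apply₂₁, Matrix.fromBlocks_apply₂₂]
  have hplus : A.map Complex.ofRealHom + Complex.I • B.map Complex.ofRealHom = M := by
    ext i j
    apply Complex.ext <;> simp [hA, hB, Matrix.map]
  have hminus : A.map Complex.ofRealHom - Complex.I • B.map Complex.ofRealHom =
      M.map (starRingEnd ℂ) := by
    ext i j
    apply Complex.ext <;> simp [hA, hB, Matrix.map]
  have hC : (Complex.ofRealHom (Matrix.fromBlocks A (-B) B A).det) =
      Complex.ofRealHom (Complex.normSq M.det) := by
    rw [RingHom.map_det, RingHom.mapMatrix_apply, hmap, det_blocks, hplus, hminus,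
      ← RingHom.mapMatrix_apply, ← RingHom.map_det, Complex.mul_conj]
    rfl
  have h6 : (Matrix.fromBlocks A (-B) B A).det = Complex.normSq M.det :=
    Complex.ofReal_injective (by simpa [Complex.ofRealHom_eq_coe] using hC)
  rw [hdetR, h6, hM, LinearMap.det_toMatrix]

/-- The Lusin/Lebesgue-point computation in the proof of Proposition 5.2
(1 ⇒ 2): if `f` is holomorphic and injective on an open set `U ⊆ ℂ^k` and the
locally integrable density `φ ≥ 0` transforms with constant Jacobian `D` under
`f` (`∫_{f(A)} φ dm = D ∫_A φ dm` for all Borel `A ⊆ U`, `m` being Lebesgue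
measure on `ℂ^k ≅ ℝ^{2k}`), then `φ(f(x)) |det_ℂ(d_x f)|² = D φ(x)` for
`m`-almost every `x ∈ U`. -/
theorem density_jacobian_identity
    (k : ℕ) (hk : 1 ≤ k) (U : Set (Fin k → ℂ)) (hU : IsOpen U)
    (f : (Fin k → ℂ) → (Fin k → ℂ))
    (hf : DifferentiableOn ℂ f U) (hinj : Set.InjOn f U)
    (φ : (Fin k → ℂ) → ℝ) (hφ0 : ∀ x, 0 ≤ φ x)
    (hφ : LocallyIntegrable φ volume)
    (D : ℝ) (hD : 0 < D)
    (hjac : ∀ A : Set (Fin k → ℂ), MeasurableSet A → A ⊆ U →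
      ∫ x in f '' A, φ x ∂volume = D * ∫ x in A, φ x ∂volume) :
    ∀ᵐ x ∂(volume.restrict U),
      φ (f x) * ‖LinearMap.det
        ((fderiv ℂ f x : (Fin k → ℂ) →L[ℂ] (Fin k → ℂ)) :
          (Fin k → ℂ) →ₗ[ℂ] (Fin k → ℂ))‖ ^ 2 = D * φ x := by
  classical
  have hU' : MeasurableSet U := hU.measurableSet
  set g : (Fin k → ℂ) → ℂ := fun x =>
    LinearMap.det ((fderiv ℂ f x : (Fin k → ℂ) →L[ℂ] (Fin k → ℂ)) :
      (Fin k → ℂ) →ₗ[ℂ] (Fin k → ℂ)) with hgdef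
  set f' : (Fin k → ℂ) → (Fin k → ℂ) →L[ℝ] (Fin k → ℂ) :=
    fun x => (fderiv ℂ f x).restrictScalars ℝ with hf'def
  have hdet : ∀ x, (f' x).det = Complex.normSq (g x) := fun x =>
    det_restrictScalars_complex _
  have habs : ∀ x, |(f' x).det| = ‖g x‖ ^ 2 := fun x => by
    rw [hdet x, abs_of_nonneg (Complex.normSq_nonneg _), ← Complex.sq_norm]
  have hgm : Measurable g :=
    ContinuousLinearMap.continuous_det.measurable.comp (measurable_fderiv ℂ f)
  have hdm : Measurable fun x => ENNReal.ofReal |(f' x).det| := by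
    have heq : (fun x => ENNReal.ofReal |(f' x).det|)
        = fun x => ENNReal.ofReal (‖g x‖ ^ 2) := by
      funext x; rw [habs x]
    rw [heq]
    exact ((continuous_norm.measurable.comp hgm).pow_const 2).ennreal_ofReal
  have hder : ∀ s : Set (Fin k → ℂ), s ⊆ U → ∀ x ∈ s, HasFDerivWithinAt f (f' x) s x := by
    intro s hs x hx
    exact (((hf.differentiableAt (hU.mem_nhds (hs hx))).hasFDerivAt).restrictScalars
      ℝ).hasFDerivWithinAt
  obtain ⟨K, hKc, hKU, hKun⟩ : ∃ K : ℕ → Set (Fin k → ℂ),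
      (∀ n, IsCompact (K n)) ∧ (∀ n, K n ⊆ U) ∧ (⋃ n, K n) = U := by
    haveI : LocallyCompactSpace U := hU.isLocallyClosed.locallyCompactSpace
    refine ⟨fun n => Subtype.val '' compactCovering U n, fun n =>
      ((isCompact_compactCovering U n).image continuous_subtype_val), fun n => ?_, ?_⟩
    · rintro x ⟨y, -, rfl⟩; exact y.2
    · rw [← image_iUnion, iUnion_compactCovering, image_univ, Subtype.range_coe]
  set Z : Set (Fin k → ℂ) := U ∩ g ⁻¹' {0} with hZdef
  have hZm : MeasurableSet Z := hU'.inter (hgm (measurableSet_singleton 0))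
  set V : Set (Fin k → ℂ) := U \ Z with hVdef
  have hVm : MeasurableSet V := hU'.diff hZm
  have hVU : V ⊆ U := diff_subset
  have hVg : ∀ x ∈ V, g x ≠ 0 := fun x hx h0 => hx.2 ⟨hx.1, h0⟩
  -- the image of the critical set is null
  have hZimg : volume (f '' Z) = 0 := by
    refine addHaar_image_eq_zero_of_det_fderivWithin_eq_zero volume
      (hder Z inter_subset_left) (fun x hx => ?_)
    have hg0 : g x = 0 := hx.2
    rw [hdet x, hg0, map_zero]
  -- φ vanishes a.e. on Z
  have hφZ : ∀ᵐ x ∂volume.restrict Z, φ x = 0 := by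
    have hcov : Z = ⋃ n, Z ∩ K n := by
      rw [← inter_iUnion, hKun]
      exact (inter_eq_left.mpr inter_subset_left).symm
    rw [hcov, ae_restrict_iUnion_iff]
    intro n
    have hm : MeasurableSet (Z ∩ K n) := hZm.inter (hKc n).measurableSet
    have hint : IntegrableOn φ (Z ∩ K n) volume :=
      (hφ.integrableOn_isCompact (hKc n)).mono_set inter_subset_right
    have h0 : ∫ x in Z ∩ K n, φ x ∂volume = 0 := by
      have himg : volume (f '' (Z ∩ K n)) = 0 :=
        measure_mono_null (image_mono (f := f) inter_subset_left) hZimg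
      have hj := hjac (Z ∩ K n) hm (inter_subset_left.trans inter_subset_left)
      rw [show (∫ x in f '' (Z ∩ K n), φ x ∂volume) = 0 by
        rw [Measure.restrict_eq_zero.mpr himg, integral_zero_measure]] at hj
      exact ((mul_eq_zero.mp hj.symm).resolve_left (ne_of_gt hD))
    have := (integral_eq_zero_iff_of_nonneg (fun x => hφ0 x) hint).mp h0
    exact this.mono fun x hx => hx
  have hZae : ∀ᵐ x ∂volume.restrict Z,
      φ (f x) * ‖g x‖ ^ 2 = D * φ x := by
    filter_upwards [hφZ, ae_restrict_mem hZm] with x h1 h2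
    have hg0 : g x = 0 := h2.2
    rw [hg0, h1]
    simp
  -- preimages of null sets inside V are null
  have hnull : ∀ W : Set (Fin k → ℂ), MeasurableSet W → W ⊆ V →
      ∀ N : Set (Fin k → ℂ), volume N = 0 → volume (f ⁻¹' N ∩ W) = 0 := by
    intro W hWm hWV N hN
    obtain ⟨N', hNN', hN'm, hN'0⟩ := exists_measurable_superset_of_null hN
    have hWU : W ⊆ U := hWV.trans hVU
    have hI : ∫⁻ x in f ⁻¹' N' ∩ W, ENNReal.ofReal |(f' x).det| ∂volume = 0 := by
      have hle : ∀ O : Set (Fin k → ℂ), N' ⊆ O → IsOpen O →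
          ∫⁻ x in f ⁻¹' N' ∩ W, ENNReal.ofReal |(f' x).det| ∂volume ≤ volume O := by
        intro O hNO hO
        set s : Set (Fin k → ℂ) := W ∩ (U ∩ f ⁻¹' O) with hsdef
        have hsU : s ⊆ U := fun x hx => hx.2.1
        have hsm : MeasurableSet s :=
          hWm.inter (hf.continuousOn.isOpen_inter_preimage hU hO).measurableSet
        have hsub : f ⁻¹' N' ∩ W ⊆ s := fun x hx => ⟨hx.2, hWU hx.2, hNO hx.1⟩
        calc ∫⁻ x in f ⁻¹' N' ∩ W, ENNReal.ofReal |(f' x).det| ∂volume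
            ≤ ∫⁻ x in s, ENNReal.ofReal |(f' x).det| ∂volume :=
              lintegral_mono' (Measure.restrict_mono hsub le_rfl) le_rfl
          _ = volume (f '' s) :=
              lintegral_abs_det_fderiv_eq_addHaar_image volume hsm
                (hder s hsU) (hinj.mono hsU)
          _ ≤ volume O := measure_mono (by rintro y ⟨x, hxs, rfl⟩; exact hxs.2.2)
      have h2 : ∫⁻ x in f ⁻¹' N' ∩ W, ENNReal.ofReal |(f' x).det| ∂volume ≤ volume N' := by
        rw [Set.measure_eq_iInf_isOpen]
        exact le_iInf fun O => le_iInf fun hNO => le_iInf fun hO => hle O hNO hO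
      rw [hN'0] at h2
      exact le_antisymm h2 zero_le
    have hdm0 : Measurable fun x => (f' x).det := by
      have heq0 : (fun x => (f' x).det) = fun x => Complex.normSq (g x) := funext hdet
      rw [heq0]
      exact Complex.continuous_normSq.measurable.comp hgm
    have hTm : MeasurableSet {x | ¬ ((f' x).det = 0)} :=
      (hdm0 (measurableSet_singleton 0)).compl
    have h3 := (lintegral_eq_zero_iff hdm).mp hI
    have h4 : volume.restrict (f ⁻¹' N' ∩ W) {x | ¬ ((f' x).det = 0)} = 0 := by
      have h3' : ∀ᵐ x ∂volume.restrict (f ⁻¹' N' ∩ W),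
          ENNReal.ofReal |(f' x).det| = 0 := h3
      have h4' := ae_iff.mp h3'
      have hseteq : {a | ¬ ENNReal.ofReal |(f' a).det| = 0} = {x | ¬ ((f' x).det = 0)} := by
        ext a
        simp [ENNReal.ofReal_eq_zero, abs_nonpos_iff]
      rw [← hseteq]
      exact h4'
    have h5 : volume ({x | ¬ ((f' x).det = 0)} ∩ (f ⁻¹' N' ∩ W)) = 0 := by
      rw [← Measure.restrict_apply hTm]
      exact h4
    refine measure_mono_null (fun x hx => ?_) h5
    refine ⟨?_, ⟨hNN' hx.1, hx.2⟩⟩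
    have hgx : g x ≠ 0 := hVg x (hWV hx.2)
    intro h
    exact hgx (by simpa [hdet x, Complex.normSq_eq_zero] using h)
  -- a.e.-measurability of φ ∘ f on subsets of V
  have hφfae : ∀ W : Set (Fin k → ℂ), MeasurableSet W → W ⊆ V →
      AEMeasurable (fun x => φ (f x)) (volume.restrict W) := by
    intro W hWm hWV
    have hψm : StronglyMeasurable (hφ.aestronglyMeasurable.mk φ) :=
      hφ.aestronglyMeasurable.stronglyMeasurable_mk
    have hfae : AEMeasurable f (volume.restrict W) :=
      (hf.continuousOn.mono (hWV.trans hVU)).aemeasurable hWm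
    have h1 : AEMeasurable (fun x => hφ.aestronglyMeasurable.mk φ (f x))
        (volume.restrict W) := hψm.measurable.comp_aemeasurable hfae
    have hN : volume {x | ¬ (φ x = hφ.aestronglyMeasurable.mk φ x)} = 0 :=
      ae_iff.mp hφ.aestronglyMeasurable.ae_eq_mk
    have h0 : volume.restrict W
        (f ⁻¹' {x | ¬ (φ x = hφ.aestronglyMeasurable.mk φ x)}) = 0 := by
      rw [Measure.restrict_apply' hWm]
      exact hnull W hWm hWV _ hN
    have heq : ∀ᵐ x ∂volume.restrict W, φ (f x) = hφ.aestronglyMeasurable.mk φ (f x) := by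
      rw [ae_iff]
      exact h0
    exact h1.congr (heq.mono fun x hx => hx.symm)
  -- the identity a.e. on V ∩ K n
  have hVae : ∀ n : ℕ, ∀ᵐ x ∂volume.restrict (V ∩ K n),
      φ (f x) * ‖g x‖ ^ 2 = D * φ x := by
    intro n
    set W : Set (Fin k → ℂ) := V ∩ K n with hWdef
    have hWm : MeasurableSet W := hVm.inter (hKc n).measurableSet
    have hWV : W ⊆ V := inter_subset_left
    have hWU : W ⊆ U := hWV.trans hVU
    set G : (Fin k → ℂ) → ℝ≥0∞ :=
      fun x => ENNReal.ofReal |(f' x).det| * ENNReal.ofReal (φ (f x)) with hGdef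
    set H : (Fin k → ℂ) → ℝ≥0∞ :=
      fun x => ENNReal.ofReal D * ENNReal.ofReal (φ x) with hHdef
    have hGae : AEMeasurable G (volume.restrict W) :=
      hdm.aemeasurable.mul ((hφfae W hWm hWV).ennreal_ofReal)
    have hHae : AEMeasurable H (volume.restrict W) :=
      aemeasurable_const.mul (hφ.aestronglyMeasurable.aemeasurable.ennreal_ofReal.restrict)
    have key : ∀ A : Set (Fin k → ℂ), MeasurableSet A → A ⊆ W →
        ∫⁻ x in A, G x ∂volume = ∫⁻ x in A, H x ∂volume := by
      intro A hA hAW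
      have hAU : A ⊆ U := hAW.trans hWU
      have hAK : A ⊆ K n := hAW.trans inter_subset_right
      have hφA : IntegrableOn φ A volume :=
        (hφ.integrableOn_isCompact (hKc n)).mono_set hAK
      have hKimg : IsCompact (f '' K n) :=
        (hKc n).image_of_continuousOn (hf.continuousOn.mono (hKU n))
      have hφfA : IntegrableOn φ (f '' A) volume :=
        (hφ.integrableOn_isCompact hKimg).mono_set (image_mono (f := f) hAK)
      have cov : ∫⁻ x in f '' A, ENNReal.ofReal (φ x) ∂volume
          = ∫⁻ x in A, ENNReal.ofReal |(f' x).det| * ENNReal.ofReal (φ (f x)) ∂volume :=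
        lintegral_image_eq_lintegral_abs_det_fderiv_mul volume hA (hder A hAU)
          (hinj.mono hAU) (fun x => ENNReal.ofReal (φ x))
      have e1 : ENNReal.ofReal (∫ x in f '' A, φ x ∂volume)
          = ∫⁻ x in f '' A, ENNReal.ofReal (φ x) ∂volume :=
        ofReal_integral_eq_lintegral_ofReal hφfA (Filter.Eventually.of_forall hφ0)
      have e2 : ENNReal.ofReal (∫ x in A, φ x ∂volume)
          = ∫⁻ x in A, ENNReal.ofReal (φ x) ∂volume :=
        ofReal_integral_eq_lintegral_ofReal hφA (Filter.Eventually.of_forall hφ0)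
      have hj := congrArg ENNReal.ofReal (hjac A hA hAU)
      rw [ENNReal.ofReal_mul hD.le, e1, e2, cov] at hj
      calc ∫⁻ x in A, G x ∂volume
          = ENNReal.ofReal D * ∫⁻ x in A, ENNReal.ofReal (φ x) ∂volume := hj
        _ = ∫⁻ x in A, H x ∂volume :=
            (lintegral_const_mul' _ _ ENNReal.ofReal_ne_top).symm
    have hGH : G =ᵐ[volume.restrict W] H := by
      refine ae_eq_of_forall_setLIntegral_eq_of_sigmaFinite₀ hGae hHae fun s hs _ => ?_
      rw [Measure.restrict_restrict hs]
      exact key (s ∩ W) (hs.inter hWm) inter_subset_right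
    filter_upwards [hGH] with x hx
    have h1 : ENNReal.ofReal (|(f' x).det| * φ (f x)) = ENNReal.ofReal (D * φ x) := by
      rw [ENNReal.ofReal_mul (abs_nonneg _), ENNReal.ofReal_mul hD.le]
      exact hx
    have h2 : |(f' x).det| * φ (f x) = D * φ x :=
      (ENNReal.ofReal_eq_ofReal_iff (mul_nonneg (abs_nonneg _) (hφ0 _))
        (mul_nonneg hD.le (hφ0 _))).mp h1
    rw [habs x, mul_comm] at h2
    exact h2
  -- put the pieces together
  have hcov : U = ⋃ o : Option ℕ, (Option.elim o Z fun n => V ∩ K n) := by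
    ext x
    simp only [mem_iUnion]
    constructor
    · intro hx
      by_cases h0 : g x = 0
      · exact ⟨none, hx, h0⟩
      · have hxV : x ∈ V := ⟨hx, fun hc => h0 hc.2⟩
        have : x ∈ ⋃ n, K n := by rw [hKun]; exact hx
        obtain ⟨n, hn⟩ := mem_iUnion.mp this
        exact ⟨some n, hxV, hn⟩
    · rintro ⟨(_ | n), hx⟩
      · exact hx.1
      · exact hx.1.1
  rw [hcov, ae_restrict_iUnion_iff]
  rintro (_ | n)
  · exact hZae
  · exact hVae n
end
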